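/- Let F be a totally real number field of degree d, and regard each fractional ideal of F as a full-rank ℤ-lattice in ℝ^d via the embedding x ↦ (σ(x))_σ given by the d real embeddings of F. Then there exist constants C, C' > 0 (depending only on F) such that C · r(Λ)^d ≤ D(Λ) ≤ C' · r(Λ)^d for every nonzero fractional ideal Λ of F. -/

import Mathlib

/- Statement 12 (Lemma `L4`): for a totally real number field `F` of degree `d`,
   with fractional ideals regarded as full-rank ℤ-lattices in `ℝ^d` via the `d` real
   embeddings, there are constants `C, C' > 0` with
   `C·r(Λ)^d ≤ D(Λ) ≤ C'·r(Λ)^d` for every nonzero fractional ideal `Λ`. -/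

open NumberField MeasureTheory Module
open scoped nonZeroDivisors

namespace Stmt12

variable (F : Type*) [Field F] [NumberField F]

/-- The embedding `x ↦ (σ(x))_σ` of `F` into `ℝ^d`, `d = [F:ℚ]`, given by an enumeration
`σ` of the real embeddings of `F`. -/
noncomputable def Phi (σ : Fin (finrank ℚ F) → (F →+* ℝ)) :
    F →ₗ[ℤ] EuclideanSpace ℝ (Fin (finrank ℚ F)) :=
  AddMonoidHom.toIntLinearMap
    { toFun := fun x => WithLp.toLp 2 (fun i => σ i x)
      map_zero' := by ext i; simp
      map_add' := fun x y => by ext i; simp }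

/-- The image of a fractional ideal of `F` in `ℝ^d`, as a ℤ-submodule. -/
noncomputable def latticeOf (σ : Fin (finrank ℚ F) → (F →+* ℝ))
    (Λ : FractionalIdeal (𝓞 F)⁰ F) :
    Submodule ℤ (EuclideanSpace ℝ (Fin (finrank ℚ F))) :=
  Submodule.map (Phi F σ) ((Λ : Submodule (𝓞 F) F).restrictScalars ℤ)

/-- `r(Λ) = (1/2)·min{‖b‖ : b ∈ Λ∖{0}}`. -/
noncomputable def rlat {d : ℕ} (L : Submodule ℤ (EuclideanSpace ℝ (Fin d))) : ℝ :=
  (1 / 2) * sInf {t : ℝ | ∃ b ∈ L, b ≠ 0 ∧ ‖b‖ = t}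

/-- `D(Λ)`: the covolume of the lattice `Λ`, i.e. the Euclidean volume of a fundamental
domain of `ℝ^d/Λ`. -/
noncomputable def covol {d : ℕ} (L : Submodule ℤ (EuclideanSpace ℝ (Fin d))) : ℝ :=
  ZLattice.covolume L

/-! Under `x ↦ (σᵢ x)ᵢ` the lattice of `Λ` is carried, measure-preservingly, onto the image of `Λ`
in Mathlib's mixed space, so `D(Λ) = N(Λ)·√|d_F|`. Minkowski's theorem for a ball shows
`vol(B₁)·r(L)^d ≤ D(L)` for every lattice `L ⊂ ℝ^d`. Conversely, each nonzero `x ∈ Λ` has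
`N(Λ) ≤ |N(x)| = ∏ᵢ |σᵢ x| ≤ ‖x‖^d`, whence `N(Λ) ≤ (2 r(Λ))^d` and `D(Λ) ≤ 2^d √|d_F| r(Λ)^d`. -/

open Metric
open scoped ENNReal

section Lattice

variable {d : ℕ} (L : Submodule ℤ (EuclideanSpace ℝ (Fin d)))

lemma two_mul_rlat : 2 * rlat L = sInf {t : ℝ | ∃ b ∈ L, b ≠ 0 ∧ ‖b‖ = t} := by
  rw [rlat]; ring

lemma rlat_nonneg : 0 ≤ rlat L := by
  have := Real.sInf_nonneg (s := {t : ℝ | ∃ b ∈ L, b ≠ 0 ∧ ‖b‖ = t})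
    (by rintro _ ⟨b, -, -, rfl⟩; exact norm_nonneg b)
  linarith [two_mul_rlat L]

lemma two_mul_rlat_le_norm {b : EuclideanSpace ℝ (Fin d)} (hb : b ∈ L) (hb0 : b ≠ 0) :
    2 * rlat L ≤ ‖b‖ := by
  rw [two_mul_rlat]
  exact csInf_le ⟨0, by rintro _ ⟨c, -, -, rfl⟩; exact norm_nonneg c⟩ ⟨b, hb, hb0, rfl⟩

lemma le_two_mul_rlat_pow {N : ℝ} (hN : 0 ≤ N) (hd : 0 < d) (hL : L ≠ ⊥)
    (h : ∀ b ∈ L, b ≠ 0 → N ≤ ‖b‖ ^ d) : N ≤ (2 * rlat L) ^ d := by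
  obtain ⟨b, hb, hb0⟩ := Submodule.exists_mem_ne_zero_of_ne_bot hL
  have hroot : N ^ (d⁻¹ : ℝ) ≤ 2 * rlat L := by
    rw [two_mul_rlat]
    refine le_csInf ⟨‖b‖, b, hb, hb0, rfl⟩ ?_
    rintro _ ⟨c, hc, hc0, rfl⟩
    calc N ^ (d⁻¹ : ℝ) ≤ (‖c‖ ^ d) ^ (d⁻¹ : ℝ) := by gcongr; exact h c hc hc0
      _ = ‖c‖ := Real.pow_rpow_inv_natCast (norm_nonneg c) hd.ne'
  calc N = (N ^ (d⁻¹ : ℝ)) ^ d := (Real.rpow_inv_natCast_pow hN hd.ne').symm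
    _ ≤ (2 * rlat L) ^ d := by gcongr

lemma exists_ne_zero_mem_norm_le [DiscreteTopology L] [IsZLattice ℝ L] (hd : 0 < d) {r : ℝ}
    (hr : 0 ≤ r)
    (h : 2 ^ d * covol L ≤ (volume (ball (0 : EuclideanSpace ℝ (Fin d)) 1)).toReal * r ^ d) :
    ∃ b ∈ L, b ≠ 0 ∧ ‖b‖ ≤ r := by
  have : Nontrivial (EuclideanSpace ℝ (Fin d)) :=
    Module.nontrivial_of_finrank_pos (R := ℝ) (by rwa [finrank_euclideanSpace_fin])
  have : Countable L.toAddSubgroup := inferInstanceAs (Countable L)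
  let b := (Free.chooseBasis ℤ L).ofZLatticeBasis ℝ
  have hfund : IsAddFundamentalDomain L.toAddSubgroup (ZSpan.fundamentalDomain b) := by
    have := ZSpan.isAddFundamentalDomain' b volume
    rwa [Basis.ofZLatticeBasis_span] at this
  have hvol : volume (ZSpan.fundamentalDomain b) * 2 ^ finrank ℝ (EuclideanSpace ℝ (Fin d)) ≤
      volume (closedBall (0 : EuclideanSpace ℝ (Fin d)) r) := by
    have hF : volume (ZSpan.fundamentalDomain b) = ENNReal.ofReal (covol L) := by
      rw [covol, ZLattice.covolume_eq_measure_fundamentalDomain L volume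
        (ZLattice.isAddFundamentalDomain (Free.chooseBasis ℤ L) volume), measureReal_def,
        ENNReal.ofReal_toReal (ZSpan.fundamentalDomain_isBounded b).measure_lt_top.ne]
    have hball : volume (ball (0 : EuclideanSpace ℝ (Fin d)) 1) =
        ENNReal.ofReal (volume (ball (0 : EuclideanSpace ℝ (Fin d)) 1)).toReal :=
      (ENNReal.ofReal_toReal measure_ball_lt_top.ne).symm
    have htwo : (2 : ℝ≥0∞) ^ d = ENNReal.ofReal (2 ^ d) := by
      rw [ENNReal.ofReal_pow zero_le_two, ENNReal.ofReal_ofNat]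
    rw [hF, Measure.addHaar_closedBall volume 0 hr, hball, finrank_euclideanSpace_fin, htwo,
      ← ENNReal.ofReal_mul (show 0 ≤ covol L from (ZLattice.covolume_pos L volume).le),
      ← ENNReal.ofReal_mul (by positivity)]
    exact ENNReal.ofReal_le_ofReal (by linarith)
  obtain ⟨x, hx0, hx⟩ := exists_ne_zero_mem_lattice_of_measure_mul_two_pow_le_measure hfund
    (fun y hy => by simpa using hy) (convex_closedBall 0 r) (isCompact_closedBall 0 r) hvol
  exact ⟨x, x.2, by simpa using hx0, by simpa using hx⟩

lemma volume_ball_mul_rlat_pow_le_covol [DiscreteTopology L] [IsZLattice ℝ L] (hd : 0 < d) :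
    (volume (ball (0 : EuclideanSpace ℝ (Fin d)) 1)).toReal * rlat L ^ d ≤ covol L := by
  set B := (volume (ball (0 : EuclideanSpace ℝ (Fin d)) 1)).toReal
  have hB : 0 < B :=
    ENNReal.toReal_pos (measure_ball_pos volume _ one_pos).ne' measure_ball_lt_top.ne
  have hV : 0 < covol L := ZLattice.covolume_pos L volume
  -- the radius of the ball of volume `2 ^ d * covol L`
  set r := (2 ^ d * covol L / B) ^ (d⁻¹ : ℝ)
  have hr : r ^ d = 2 ^ d * covol L / B := Real.rpow_inv_natCast_pow (by positivity) hd.ne'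
  obtain ⟨b, hb, hb0, hbr⟩ := exists_ne_zero_mem_norm_le L hd (r := r) (by positivity)
    (by rw [hr, mul_div_cancel₀ _ hB.ne'])
  have hpow : (2 * rlat L) ^ d ≤ r ^ d :=
    pow_le_pow_left₀ (by linarith [rlat_nonneg L]) ((two_mul_rlat_le_norm L hb hb0).trans hbr) d
  rw [hr, mul_pow, le_div_iff₀ hB] at hpow
  nlinarith [pow_pos (two_pos : (0 : ℝ) < 2) d]

end Lattice

lemma measurePreserving_prodMk_of_isEmpty {α ι : Type*} [MeasureSpace α]
    [SFinite (volume : Measure α)] [Fintype ι] [IsEmpty ι] {β : ι → Type*}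
    [∀ i, MeasureSpace (β i)] (y : ∀ i, β i) :
    MeasurePreserving fun x : α => (x, y) :=
  ⟨measurable_prodMk_right, by
    rw [Measure.volume_eq_prod, Measure.volume_pi_eq_dirac y, Measure.prod_dirac]⟩

instance {K : Type*} [Field K] [IsTotallyReal K] :
    IsEmpty {w : InfinitePlace K // w.IsComplex} :=
  ⟨fun w => InfinitePlace.not_isReal_iff_isComplex.mpr w.2 (IsTotallyReal.isReal _)⟩

section AbsNorm

variable {R : Type*} [CommRing R] [IsDedekindDomain R] [Module.Free ℤ R] [Module.Finite ℤ R]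
  {K : Type*} [CommRing K] [Algebra R K] [IsFractionRing R K]

lemma _root_.FractionalIdeal.one_le_absNorm_of_le_one {J : FractionalIdeal R⁰ K} (hJ : J ≤ 1)
    (hJ0 : J ≠ 0) : 1 ≤ FractionalIdeal.absNorm J := by
  obtain ⟨I, rfl⟩ := FractionalIdeal.le_one_iff_exists_coeIdeal.mp hJ
  rw [FractionalIdeal.coeIdeal_absNorm, Nat.one_le_cast, Nat.one_le_iff_ne_zero, ne_eq,
    Ideal.absNorm_eq_zero_iff]
  rintro rfl
  exact hJ0 FractionalIdeal.coeIdeal_bot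

end AbsNorm

lemma absNorm_le_abs_norm_of_mem {Λ : FractionalIdeal (𝓞 F)⁰ F} (hΛ : Λ ≠ 0) {x : F}
    (hx : x ∈ Λ) (hx0 : x ≠ 0) : FractionalIdeal.absNorm Λ ≤ |Algebra.norm ℚ x| := by
  set J := Λ⁻¹ * FractionalIdeal.spanSingleton (𝓞 F)⁰ x
  have hJ : J ≤ 1 := by
    calc J ≤ Λ⁻¹ * Λ := mul_le_mul_right (FractionalIdeal.spanSingleton_le_iff_mem.mpr hx) _
      _ = 1 := inv_mul_cancel₀ hΛ
  have hJ0 : J ≠ 0 :=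
    mul_ne_zero (inv_ne_zero hΛ) (FractionalIdeal.spanSingleton_ne_zero_iff.mpr hx0)
  calc FractionalIdeal.absNorm Λ ≤ FractionalIdeal.absNorm Λ * FractionalIdeal.absNorm J :=
        le_mul_of_one_le_right (FractionalIdeal.absNorm_nonneg Λ)
          (FractionalIdeal.one_le_absNorm_of_le_one hJ hJ0)
    _ = |Algebra.norm ℚ x| := by
        rw [← map_mul, mul_inv_cancel_left₀ hΛ, FractionalIdeal.absNorm_span_singleton]

section RealEmbeddings

open scoped Classical

variable {σ : Fin (finrank ℚ F) → (F →+* ℝ)}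

lemma isReal_ofRealHom_comp {K : Type*} [Field K] (ψ : K →+* ℝ) :
    ComplexEmbedding.IsReal (Complex.ofRealHom.comp ψ) := by
  rw [ComplexEmbedding.isReal_iff]
  ext x
  simp [ComplexEmbedding.conjugate_coe_eq]

lemma bijective_ofRealHom_comp (hσ : Function.Injective σ) :
    Function.Bijective fun i => Complex.ofRealHom.comp (σ i) := by
  refine (Fintype.bijective_iff_injective_and_card _).mpr
    ⟨fun i j h => hσ ?_, by rw [Fintype.card_fin, Embeddings.card F ℂ]⟩
  ext x
  exact Complex.ofReal_injective (RingHom.congr_fun h x)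

lemma isTotallyReal_of_injective (hσ : Function.Injective σ) : IsTotallyReal F := by
  refine ⟨fun w => InfinitePlace.isReal_iff.mpr ?_⟩
  obtain ⟨i, hi⟩ := (bijective_ofRealHom_comp F hσ).2 w.embedding
  exact hi ▸ isReal_ofRealHom_comp (σ i)

lemma phi_injective : Function.Injective (Phi F σ) := fun _ _ h =>
  (σ ⟨0, finrank_pos⟩).injective (congrArg (fun v => v ⟨0, finrank_pos⟩) h)

lemma latticeOf_ne_bot {Λ : FractionalIdeal (𝓞 F)⁰ F} (hΛ : Λ ≠ 0) : latticeOf F σ Λ ≠ ⊥ := by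
  have hΛ' : (Λ : Submodule (𝓞 F) F) ≠ ⊥ := by
    rwa [ne_eq, FractionalIdeal.coeToSubmodule_eq_bot]
  obtain ⟨x, hx, hx0⟩ := Submodule.exists_mem_ne_zero_of_ne_bot hΛ'
  exact (Submodule.ne_bot_iff _).mpr
    ⟨Phi F σ x, ⟨x, hx, rfl⟩, (map_ne_zero_iff _ (phi_injective F)).mpr hx0⟩

lemma apply_le_norm_phi (hσ : Function.Injective σ) (w : InfinitePlace F) (x : F) :
    w x ≤ ‖Phi F σ x‖ := by
  obtain ⟨i, hi⟩ := (bijective_ofRealHom_comp F hσ).2 w.embedding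
  rw [← InfinitePlace.norm_embedding_eq, ← hi]
  calc ‖Complex.ofRealHom.comp (σ i) x‖ = ‖Phi F σ x i‖ := by simp [Phi]
    _ ≤ ‖Phi F σ x‖ := PiLp.norm_apply_le _ i

lemma abs_norm_le_norm_phi_pow (hσ : Function.Injective σ) (x : F) :
    |(Algebra.norm ℚ x : ℝ)| ≤ ‖Phi F σ x‖ ^ finrank ℚ F := by
  rw [← Rat.cast_abs, ← InfinitePlace.prod_eq_abs_norm]
  calc ∏ w : InfinitePlace F, w x ^ w.mult ≤ ∏ w : InfinitePlace F, ‖Phi F σ x‖ ^ w.mult :=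
        Finset.prod_le_prod (fun w _ => by positivity)
          (fun w _ => pow_le_pow_left₀ (apply_nonneg w x) (apply_le_norm_phi F hσ w x) _)
    _ = ‖Phi F σ x‖ ^ finrank ℚ F := by
        rw [Finset.prod_pow_eq_pow_sum, InfinitePlace.sum_mult_eq]

lemma absNorm_le_norm_pow_of_mem_latticeOf (hσ : Function.Injective σ)
    {Λ : FractionalIdeal (𝓞 F)⁰ F} (hΛ : Λ ≠ 0) {b : EuclideanSpace ℝ (Fin (finrank ℚ F))}
    (hb : b ∈ latticeOf F σ Λ) (hb0 : b ≠ 0) :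
    (FractionalIdeal.absNorm Λ : ℝ) ≤ ‖b‖ ^ finrank ℚ F := by
  obtain ⟨x, hx, rfl⟩ := hb
  have hx0 : x ≠ 0 := by
    rintro rfl
    exact hb0 (map_zero _)
  calc (FractionalIdeal.absNorm Λ : ℝ) ≤ |(Algebra.norm ℚ x : ℝ)| := by
        exact_mod_cast absNorm_le_abs_norm_of_mem F hΛ hx hx0
    _ ≤ ‖Phi F σ x‖ ^ finrank ℚ F := abs_norm_le_norm_phi_pow F hσ x

variable [IsTotallyReal F]

noncomputable def realPlaceEquiv (hσ : Function.Injective σ) :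
    Fin (finrank ℚ F) ≃ {w : InfinitePlace F // w.IsReal} :=
  (Equiv.ofBijective _ (bijective_ofRealHom_comp F hσ)).trans
    ((Equiv.subtypeUnivEquiv IsTotallyReal.complexEmbedding_isReal).symm.trans
      InfinitePlace.mkReal)

lemma embedding_of_isReal_realPlaceEquiv (hσ : Function.Injective σ) (i : Fin (finrank ℚ F)) :
    InfinitePlace.embedding_of_isReal (realPlaceEquiv F hσ i).2 = σ i := by
  ext x
  apply Complex.ofReal_injective
  rw [InfinitePlace.embedding_of_isReal_apply]
  simp [realPlaceEquiv, InfinitePlace.embedding_mk_eq_of_isReal (isReal_ofRealHom_comp (σ i))]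

noncomputable def toMixedSpace (hσ : Function.Injective σ) :
    EuclideanSpace ℝ (Fin (finrank ℚ F)) ≃L[ℝ] mixedEmbedding.mixedSpace F :=
  ((EuclideanSpace.equiv (Fin (finrank ℚ F)) ℝ).toLinearEquiv.trans
    ((LinearEquiv.piCongrLeft ℝ (fun _ => ℝ) (realPlaceEquiv F hσ)).trans
      LinearEquiv.prodUnique.symm)).toContinuousLinearEquiv

lemma measurePreserving_toMixedSpace (hσ : Function.Injective σ) :
    MeasurePreserving (toMixedSpace F hσ) volume volume := by
  have h := (measurePreserving_prodMk_of_isEmpty (α := {w : InfinitePlace F // w.IsReal} → ℝ)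
    (0 : {w : InfinitePlace F // w.IsComplex} → ℂ)).comp
    ((volume_measurePreserving_piCongrLeft (fun _ => ℝ) (realPlaceEquiv F hσ)).comp
      (EuclideanSpace.volume_preserving_symm_measurableEquiv_toLp _))
  have hfun : ⇑(toMixedSpace F hσ) = (fun x => (x, 0)) ∘
      ⇑(MeasurableEquiv.piCongrLeft (fun _ => ℝ) (realPlaceEquiv F hσ)) ∘
        ⇑(MeasurableEquiv.toLp 2 (Fin (finrank ℚ F) → ℝ)).symm := by
    funext v
    exact Prod.ext rfl (Subsingleton.elim _ _)
  rwa [← hfun] at h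

lemma toMixedSpace_phi (hσ : Function.Injective σ) (x : F) :
    toMixedSpace F hσ (Phi F σ x) = mixedEmbedding F x := by
  refine Prod.ext ?_ (Subsingleton.elim _ _)
  funext w
  obtain ⟨i, rfl⟩ := (realPlaceEquiv F hσ).surjective w
  rw [mixedEmbedding.mixedEmbedding_apply_isReal, embedding_of_isReal_realPlaceEquiv]
  exact Equiv.piCongrLeft_apply_apply (fun _ => ℝ) (realPlaceEquiv F hσ) (Phi F σ x).ofLp i

lemma latticeOf_eq_comap (hσ : Function.Injective σ) {Λ : FractionalIdeal (𝓞 F)⁰ F}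
    (hΛ : Λ ≠ 0) : latticeOf F σ Λ = ZLattice.comap ℝ
      (mixedEmbedding.idealLattice F (Units.mk0 Λ hΛ)) (toMixedSpace F hσ).toLinearMap := by
  ext v
  simp only [latticeOf, Submodule.mem_map, Submodule.restrictScalars_mem,
    FractionalIdeal.mem_coe, ZLattice.comap, Submodule.mem_comap,
    LinearMap.coe_restrictScalars, mixedEmbedding.mem_idealLattice]
  constructor
  · rintro ⟨x, hx, rfl⟩
    exact ⟨x, hx, (toMixedSpace_phi F hσ x).symm⟩
  · rintro ⟨y, hy, hyv⟩
    exact ⟨y, hy, (toMixedSpace F hσ).injective (by rw [toMixedSpace_phi, hyv]; rfl)⟩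

lemma covol_latticeOf (hσ : Function.Injective σ) {Λ : FractionalIdeal (𝓞 F)⁰ F}
    (hΛ : Λ ≠ 0) : covol (latticeOf F σ Λ) = FractionalIdeal.absNorm Λ * √|(discr F : ℝ)| := by
  rw [covol, latticeOf_eq_comap F hσ hΛ,
    ZLattice.covolume_comap _ _ _ (measurePreserving_toMixedSpace F hσ),
    mixedEmbedding.covolume_idealLattice, IsTotallyReal.nrComplexPlaces_eq_zero, pow_zero,
    mul_one]
  rfl

end RealEmbeddings

theorem statement12
    (σ : Fin (finrank ℚ F) → (F →+* ℝ)) (hσ : Function.Bijective σ) :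
    ∃ C > (0 : ℝ), ∃ C' > (0 : ℝ), ∀ Λ : FractionalIdeal (𝓞 F)⁰ F, Λ ≠ 0 →
      C * rlat (latticeOf F σ Λ) ^ (finrank ℚ F) ≤ covol (latticeOf F σ Λ) ∧
      covol (latticeOf F σ Λ) ≤ C' * rlat (latticeOf F σ Λ) ^ (finrank ℚ F) := by
  have := isTotallyReal_of_injective F hσ.injective
  have hd : 0 < finrank ℚ F := finrank_pos
  refine ⟨(volume (ball (0 : EuclideanSpace ℝ (Fin (finrank ℚ F))) 1)).toReal,
    ENNReal.toReal_pos (measure_ball_pos volume _ one_pos).ne' measure_ball_lt_top.ne,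
    2 ^ finrank ℚ F * √|(discr F : ℝ)|,
    mul_pos (by positivity) (Real.sqrt_pos.mpr (abs_pos.mpr (mod_cast discr_ne_zero F))),
    fun Λ hΛ => ⟨?_, ?_⟩⟩
  · rw [latticeOf_eq_comap F hσ.injective hΛ]
    exact volume_ball_mul_rlat_pow_le_covol _ hd
  · have hN := le_two_mul_rlat_pow _ (Rat.cast_nonneg.mpr (FractionalIdeal.absNorm_nonneg Λ))
      hd (latticeOf_ne_bot F hΛ)
      (fun _ hb hb0 => absNorm_le_norm_pow_of_mem_latticeOf F hσ.injective hΛ hb hb0)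
    calc covol (latticeOf F σ Λ) = FractionalIdeal.absNorm Λ * √|(discr F : ℝ)| :=
          covol_latticeOf F hσ.injective hΛ
      _ ≤ (2 * rlat (latticeOf F σ Λ)) ^ finrank ℚ F * √|(discr F : ℝ)| := by gcongr
      _ = 2 ^ finrank ℚ F * √|(discr F : ℝ)| * rlat (latticeOf F σ Λ) ^ finrank ℚ F := by ring

end Stmt12
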